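/- Let J : ℕ^N → ℝ be a symmetric function (invariant under permutations of its arguments) that is increasing in each coordinate, let p ∈ [0,1], α ∈ (0,1), and T₁,…,T_N ∈ ℕ₊. For each k define the cost g(k) = Σ_{i≠k} T_i + T_k(1−p) + α·p·J(T₁+1,…,T_{k−1}+1, 1, T_{k+1}+1,…,T_N+1) + α(1−p)·J(T₁+1,…,T_N+1). Then g attains its minimum over k ∈ {1,…,N} at any index k* with T_{k*} = max_{1≤k≤N} T_k. -/
import Mathlib


open Finset

/-- With `N > 1` processes, a symmetric value function increasing in each
coordinate: the sampling cost `g k` is minimized at any index of maximal age. -/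
theorem sample_max_age_process
    (N : ℕ) (hN : 1 ≤ N)
    (J : (Fin N → ℕ) → ℝ)
    (hsym : ∀ (σ : Equiv.Perm (Fin N)) (t : Fin N → ℕ), J (t ∘ σ) = J t)
    (hmono : ∀ t t' : Fin N → ℕ, (∀ i, t i ≤ t' i) → J t ≤ J t')
    (p : ℝ) (hp : p ∈ Set.Icc (0 : ℝ) 1)
    (α : ℝ) (hα0 : 0 < α) (hα1 : α < 1)
    (T : Fin N → ℕ) (hT : ∀ i, 1 ≤ T i)
    (g : Fin N → ℝ)
    (hg : ∀ k, g k =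
      (∑ i ∈ univ.erase k, (T i : ℝ)) + (T k : ℝ) * (1 - p)
        + α * p * J (fun i => if i = k then 1 else T i + 1)
        + α * (1 - p) * J (fun i => T i + 1))
    (kstar : Fin N) (hkstar : ∀ k, T k ≤ T kstar) :
    ∀ k, g kstar ≤ g k := by
  intro k
  have hsum : ∀ j : Fin N, (∑ i ∈ univ.erase j, (T i : ℝ)) = (∑ i, (T i : ℝ)) - T j := by
    intro j
    rw [← Finset.add_sum_erase _ _ (mem_univ j)]
    ring
  have hJ : J (fun i => if i = kstar then 1 else T i + 1)
      ≤ J (fun i => if i = k then 1 else T i + 1) := by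
    rw [← hsym (Equiv.swap k kstar) (fun i => if i = k then 1 else T i + 1)]
    apply hmono
    intro i
    simp only [Function.comp]
    rcases eq_or_ne i kstar with rfl | h1
    · simp [Equiv.swap_apply_right]
    · rcases eq_or_ne i k with rfl | h2
      · rw [Equiv.swap_apply_left]
        simp only [if_neg h1, if_neg (Ne.symm h1)]
        exact Nat.add_le_add_right (hkstar i) 1
      · rw [Equiv.swap_apply_of_ne_of_ne h2 h1]
        simp [h1, h2]
  have hTk : ((T k : ℝ)) ≤ (T kstar : ℝ) := Nat.cast_le.mpr (hkstar k)
  rw [hg k, hg kstar, hsum, hsum]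
  nlinarith [mul_nonneg hp.1 (sub_nonneg.2 hTk),
    mul_nonneg (mul_nonneg hα0.le hp.1) (sub_nonneg.2 hJ)]
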